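/- arXiv:1605.04708 — 5 statements merged into one kernel-verified Lean document; each statement's English description precedes it below -/
import Mathlib

section
/- Suppose additionally that h_0 is a unit in R. Then for j = 1, 2, 3 one has c_{p−j} = −h_0^{−(p−1)/2} · (V_0 · M_1 · M_2 ⋯ M_{p−1})_{9−j}; that is, the vector (c_{p−1}, c_{p−2}, c_{p−3}) equals the last three entries, in reversed order, of the row vector −h_0^{−(p−1)/2} · V_0 · M_1 · M_2 ⋯ M_{p−1}. -/
open Polynomial

/-- The 8×8 matrix `M_k` attached to a polynomial `h` of degree at most 8:
its only nonzero entries are the subdiagonal entries `(M_k)_{i+1,i} = 2k·h_0`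
and the last-column entries `(M_k)_{i,8} = ((9−i) − 2k)·h_{9−i}` (1-indexed). -/
def Mmat {R : Type*} [CommRing R] (h : Polynomial R) (k : ℕ) :
    Matrix (Fin 8) (Fin 8) R :=
  Matrix.of fun i j =>
    (if (i : ℕ) = (j : ℕ) + 1 then ((2 * (k : ℤ) : ℤ) : R) * h.coeff 0 else 0) +
    (if (j : ℕ) = 7 then
      (((8 - (i : ℕ) : ℤ) - 2 * (k : ℤ) : ℤ) : R) * h.coeff (8 - (i : ℕ)) else 0)

/-- The row vector `V_0 = (0,0,0,0,0,0,0,1)`. -/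
def V0 {R : Type*} [CommRing R] : Fin 8 → R := fun i => if (i : ℕ) = 7 then 1 else 0

/-!
With `n = (p - 1) / 2`, the polynomial `f = h ^ n` satisfies `2 h f' + h' f = (2n + 1) h' h ^ n = 0`
in characteristic `p`, i.e. `∑_{a + b = N} (2b + a) h_a c_b = 0` for every `N`. For `N = m + 1`
this says that the window `v_m = (c_{m-7}, …, c_m)` satisfies `v_m M_{m+1} = 2(m+1) h_0 v_{m+1}`:
the subdiagonal of `M_{m+1}` shifts the window and its last column produces `c_{m+1}`. Starting
from `v_0 = h_0 ^ n V_0` and telescoping, `V_0 M_1 ⋯ M_{p-1} = h_0 ^ (-n) (∏_{k<p} 2k h_0) v_{p-1}`,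
and `∏_{k=1}^{p-1} 2k = 2^(p-1) (p-1)! = -1` by Fermat and Wilson.
-/

open Finset

namespace Polynomial

variable {R : Type*} [CommRing R]

theorem coeff_X_mul_derivative (q : R[X]) (n : ℕ) : (X * derivative q).coeff n = n * q.coeff n := by
  cases n with
  | zero => simp
  | succ n => rw [coeff_X_mul, coeff_derivative, mul_comm]; push_cast; ring

theorem two_mul_mul_derivative_pow_add_eq_zero (h : R[X]) {n : ℕ}
    (hn : ((2 * n + 1 : ℕ) : R) = 0) : 2 * h * derivative (h ^ n) + derivative h * h ^ n = 0 := by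
  cases n with
  | zero =>
    have : Subsingleton R := subsingleton_of_zero_eq_one (by simpa using hn.symm)
    exact Subsingleton.elim _ _
  | succ n =>
    calc 2 * h * derivative (h ^ (n + 1)) + derivative h * h ^ (n + 1)
        = ((2 * (n + 1) + 1 : ℕ) : R[X]) * (h ^ (n + 1) * derivative h) := by
          rw [derivative_pow_succ, C_add, C_1, C_eq_natCast]; push_cast; ring
      _ = 0 := by rw [← C_eq_natCast, hn, C_0, zero_mul]

theorem sum_antidiagonal_mul_coeff_eq_zero {h f : R[X]}
    (hf : 2 * h * derivative f + derivative h * f = 0) (N : ℕ) :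
    ∑ x ∈ antidiagonal N, (2 * x.2 + x.1 : R) * h.coeff x.1 * f.coeff x.2 = 0 := by
  have hX : 2 * (h * (X * derivative f)) + (X * derivative h) * f = 0 := by
    linear_combination X * hf
  have := congrArg (coeff · N) hX
  simp only [coeff_add, coeff_ofNat_mul, coeff_zero] at this
  rw [coeff_mul, coeff_mul, mul_sum, ← sum_add_distrib] at this
  rw [← this]
  refine sum_congr rfl fun x _ => ?_
  rw [coeff_X_mul_derivative, coeff_X_mul_derivative]
  ring

theorem sum_range_nine_mul_coeff_X_pow_mul_eq_zero {h f : R[X]}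
    (hf : 2 * h * derivative f + derivative h * f = 0) (hdeg : h.natDegree ≤ 8) (m : ℕ) :
    ∑ t ∈ range 9, (2 * (m + 1) - t : R) * h.coeff t * (X ^ 7 * f).coeff (m + 8 - t) = 0 := by
  set T : ℕ → R := fun t => (2 * (m + 1) - t : R) * h.coeff t * (X ^ 7 * f).coeff (m + 8 - t)
  have h_deg : ∑ t ∈ range 9, T t = ∑ t ∈ range (m + 10), T t :=
    sum_subset (range_subset_range.mpr (by omega)) fun t _ ht => by
      rw [mem_range, not_lt] at ht
      simp only [T, coeff_eq_zero_of_natDegree_lt (by omega : h.natDegree < t), mul_zero, zero_mul]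
  have h_neg : ∑ t ∈ range (m + 2), T t = ∑ t ∈ range (m + 10), T t :=
    sum_subset (range_subset_range.mpr (by omega)) fun t _ ht => by
      rw [mem_range, not_lt] at ht
      simp only [T, coeff_X_pow_mul', if_neg (by omega : ¬ 7 ≤ m + 8 - t), mul_zero]
  have h_shift : ∑ t ∈ range (m + 2), T t
      = ∑ t ∈ range (m + 2), (2 * (m + 1 - t : ℕ) + t : R) * h.coeff t * f.coeff (m + 1 - t) :=
    sum_congr rfl fun t ht => by
      rw [mem_range] at ht
      simp only [T, coeff_X_pow_mul', if_pos (by omega : 7 ≤ m + 8 - t),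
        (by omega : m + 8 - t - 7 = m + 1 - t), Nat.cast_sub (by omega : t ≤ m + 1)]
      push_cast
      ring
  rw [h_deg, ← h_neg, h_shift, ← sum_antidiagonal_mul_coeff_eq_zero hf (m + 1),
    Nat.sum_antidiagonal_eq_sum_range_succ (fun a b => (2 * b + a : R) * h.coeff a * f.coeff b)]

end Polynomial

section

variable {R : Type*} [CommRing R]

theorem vecMul_Mmat_of_lt (h : R[X]) (k : ℕ) (w : Fin 8 → R) {j : Fin 8} (hj : (j : ℕ) < 7) :
    Matrix.vecMul w (Mmat h k) j = 2 * k * h.coeff 0 * w ⟨j + 1, by omega⟩ := by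
  simp only [Matrix.vecMul, dotProduct, Mmat, Matrix.of_apply, if_neg hj.ne, add_zero]
  rw [sum_eq_single ⟨j + 1, by omega⟩ (fun i _ hi => by rw [if_neg (hi ∘ Fin.ext), mul_zero])
    (by simp), if_pos rfl]
  push_cast
  ring

theorem vecMul_Mmat_last (h : R[X]) (k : ℕ) (w : Fin 8 → R) :
    Matrix.vecMul w (Mmat h k) 7
      = ∑ i : Fin 8, w i * ((8 - (i : ℕ) - 2 * k : R) * h.coeff (8 - i)) := by
  simp [Matrix.vecMul, dotProduct, Mmat, show ∀ i : Fin 8, (i : ℕ) ≠ 8 by omega]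

/-- `(c_{m-7}, …, c_m)` for `c_k = f.coeff k`; the factor `X ^ 7` supplies the zeros at negative
indices. -/
noncomputable def window (f : R[X]) (m : ℕ) : Fin 8 → R := fun i => (X ^ 7 * f).coeff (m + i)

theorem vecMul_window_Mmat {h f : R[X]} (hf : 2 * h * derivative f + derivative h * f = 0)
    (hdeg : h.natDegree ≤ 8) (m : ℕ) :
    Matrix.vecMul (window f m) (Mmat h (m + 1))
      = (2 * (m + 1) * h.coeff 0 : R) • window f (m + 1) := by
  funext j
  rw [Pi.smul_apply, smul_eq_mul]
  by_cases hj : (j : ℕ) < 7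
  · rw [vecMul_Mmat_of_lt h _ _ hj]
    simp only [window, add_assoc, add_comm 1]
    push_cast
    ring
  · obtain rfl : j = 7 := Fin.ext (by omega)
    have := sum_range_nine_mul_coeff_X_pow_mul_eq_zero hf hdeg m
    rw [vecMul_Mmat_last]
    simp only [sum_range_succ, range_one, sum_singleton, Nat.cast_zero, sub_zero, tsub_zero,
      coeff_X_pow_mul, Nat.cast_one, Nat.add_one_sub_one, Nat.cast_ofNat, Nat.reduceSubDiff,
      add_tsub_cancel_right, Nat.cast_add, window, Fin.sum_univ_eight, Fin.isValue,
      Fin.coe_ofNat_eq_mod, Nat.zero_mod, add_zero, Nat.one_mod, Nat.reduceMod, Nat.mod_succ]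
      at this ⊢
    linear_combination -this

theorem Matrix.vecMul_prod_map_range_of_vecMul_eq_smul {n : Type*} [Fintype n] [DecidableEq n]
    (A : ℕ → Matrix n n R) (w : ℕ → n → R) (c : ℕ → R)
    (hstep : ∀ k, Matrix.vecMul (w k) (A k) = c k • w (k + 1)) (N : ℕ) :
    Matrix.vecMul (w 0) ((List.range N).map A).prod = (∏ k ∈ range N, c k) • w N := by
  induction N with
  | zero => simp
  | succ N ih =>
    rw [List.range_succ, List.map_append, List.prod_append, List.map_singleton,
      List.prod_singleton, ← Matrix.vecMul_vecMul, ih, Matrix.smul_vecMul, hstep, smul_smul,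
      prod_range_succ]

theorem prod_range_two_mul_succ_eq_neg_one {p : ℕ} [Fact p.Prime] (hodd : p ≠ 2) [CharP R p] :
    ∏ k ∈ range (p - 1), (2 * (k + 1) : R) = -1 := by
  have htwo : (2 : ZMod p) ≠ 0 := Ring.two_ne_zero (by rwa [ZMod.ringChar_zmod_n])
  have hZ : ((∏ k ∈ range (p - 1), 2 * (k + 1) : ℕ) : ZMod p) = -1 := by
    rw [prod_mul_distrib, prod_const, card_range, Nat.cast_mul, Nat.cast_pow, Nat.cast_ofNat,
      ZMod.pow_card_sub_one_eq_one htwo, one_mul, prod_range_add_one_eq_factorial,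
      ZMod.wilsons_lemma]
  have := congrArg (ZMod.castHom (dvd_refl p) R) hZ
  rw [map_natCast, map_neg, map_one] at this
  exact_mod_cast this

end

theorem coeff_eq_neg_inv_pow_mul_prod_entry
    {R : Type*} [CommRing R] (p : ℕ) (hp : p.Prime) (hodd : p ≠ 2) [CharP R p]
    (h : Polynomial R) (hdeg : h.natDegree ≤ 8)
    (u : Rˣ) (hu : (u : R) = h.coeff 0) :
    ∀ (j : ℕ), ∀ (hj1 : 1 ≤ j) (hj2 : j ≤ 3),
      (h ^ ((p - 1) / 2)).coeff (p - j) =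
        -(((u⁻¹ : Rˣ) : R) ^ ((p - 1) / 2)) *
          Matrix.vecMul V0 (((List.range (p - 1)).map (fun k => Mmat h (k + 1))).prod)
            ⟨8 - j, by omega⟩ := by
  intro j hj1 hj2
  have := Fact.mk hp
  have hp2 := hp.two_le
  set n := (p - 1) / 2
  have hn : n + n = p - 1 := by obtain ⟨k, hk⟩ := hp.odd_of_ne_two hodd; omega
  have hf : 2 * h * derivative (h ^ n) + derivative h * h ^ n = 0 :=
    two_mul_mul_derivative_pow_add_eq_zero h (by
      rw [two_mul, hn, Nat.sub_add_cancel hp.one_le]; exact CharP.cast_eq_zero R p)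
  have hunit : ((u⁻¹ : Rˣ) : R) ^ n * (u : R) ^ n = 1 := by rw [← mul_pow, Units.inv_mul, one_pow]
  have hc0 : (h ^ n).coeff 0 = (u : R) ^ n := by
    rw [hu, coeff_zero_eq_eval_zero, eval_pow, coeff_zero_eq_eval_zero]
  have hV0 : (V0 : Fin 8 → R) = ((u⁻¹ : Rˣ) : R) ^ n • window (h ^ n) 0 := by
    funext i
    fin_cases i <;> simp [V0, window, coeff_X_pow_mul', hc0, hunit]
  have hprod : ∏ k ∈ range (p - 1), (2 * (k + 1) * h.coeff 0 : R) = -(u : R) ^ (n + n) := by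
    rw [prod_mul_distrib, prod_range_two_mul_succ_eq_neg_one hodd, prod_const, card_range, ← hu, hn]
    ring
  rw [hV0, Matrix.smul_vecMul, Matrix.vecMul_prod_map_range_of_vecMul_eq_smul _ _ _
    (vecMul_window_Mmat hf hdeg), hprod]
  simp only [Pi.smul_apply, smul_eq_mul, window, coeff_X_pow_mul',
    if_pos (by omega : 7 ≤ p - 1 + (8 - j)), (by omega : p - 1 + (8 - j) - 7 = p - j)]
  linear_combination (-(h ^ n).coeff (p - j) * (((u⁻¹ : Rˣ) : R) ^ n * (u : R) ^ n + 1)) * hunit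
end

section
/- For every integer k with 1 ≤ k ≤ p−1 one has the identity 2k·h_0 · v_k = v_{k−1} · M_k in R^8, where v_{k−1} · M_k denotes the row-vector-times-matrix product. -/
open Polynomial

/-- The row vector `v_k = (c_{k−7}, …, c_k)` of coefficients of `h^((p−1)/2)`,
with the convention that coefficients of negative index are zero. -/
noncomputable def vvec {R : Type*} [CommRing R] (h : Polynomial R) (p : ℕ) (k : ℕ) : Fin 8 → R :=
  fun i => if k + (i : ℕ) < 7 then 0 else (h ^ ((p - 1) / 2)).coeff (k + (i : ℕ) - 7)


open Finset in
private lemma my_coeff_mul_range9 {R : Type*} [CommRing R] (a q : R[X])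
    (ha : a.natDegree ≤ 8) (n : ℕ) :
    (a * q).coeff n =
      ∑ i ∈ Finset.range 9, a.coeff i * (if n < i then 0 else q.coeff (n - i)) := by
  rw [Polynomial.coeff_mul, Finset.Nat.sum_antidiagonal_eq_sum_range_succ_mk]
  have h1 : ∑ i ∈ Finset.range (n+1), a.coeff i * q.coeff (n - i)
      = ∑ i ∈ Finset.range (n+1), a.coeff i * (if n < i then 0 else q.coeff (n - i)) := by
    refine Finset.sum_congr rfl fun i hi => ?_
    rw [Finset.mem_range] at hi
    rw [if_neg (by omega)]
  rw [h1]
  have e1 : ∑ i ∈ Finset.range (n+1), a.coeff i * (if n < i then 0 else q.coeff (n - i))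
      = ∑ i ∈ Finset.range (max 9 (n+1)), a.coeff i * (if n < i then 0 else q.coeff (n - i)) := by
    refine Finset.sum_subset (Finset.range_subset_range.2 (le_max_right _ _)) fun i _ hi => ?_
    rw [Finset.mem_range, not_lt] at hi
    rw [if_pos (by omega), mul_zero]
  have e2 : ∑ i ∈ Finset.range 9, a.coeff i * (if n < i then 0 else q.coeff (n - i))
      = ∑ i ∈ Finset.range (max 9 (n+1)), a.coeff i * (if n < i then 0 else q.coeff (n - i)) := by
    refine Finset.sum_subset (Finset.range_subset_range.2 (le_max_left _ _)) fun i _ hi => ?_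
    rw [Finset.mem_range, not_lt] at hi
    rw [Polynomial.coeff_eq_zero_of_natDegree_lt (by omega), zero_mul]
  rw [e1, ← e2]

open Finset in
private lemma my_poly_id {R : Type*} [CommRing R] (p : ℕ) (hp : p.Prime) (hodd : p ≠ 2)
    [CharP R p] (h : R[X]) :
    C (2 : R) * (h * derivative (h ^ ((p-1)/2))) + derivative h * h ^ ((p-1)/2) = 0 := by
  have hmodd : p % 2 = 1 := Nat.odd_iff.mp (hp.odd_of_ne_two hodd)
  have hp2 : 2 ≤ p := hp.two_le
  have hm : 2 * ((p-1)/2) + 1 = p := by omega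
  set m := (p-1)/2 with hmdef
  have hm1 : 1 ≤ m := by omega
  rw [derivative_pow]
  have hpow : h * h ^ (m-1) = h ^ m := by
    conv_rhs => rw [show m = (m-1)+1 by omega]
    rw [pow_succ]; ring
  have step : C (2 : R) * (h * (C (m:R) * h ^ (m-1) * derivative h)) + derivative h * h ^ m
      = C ((2 * m + 1 : ℕ) : R) * (h ^ m * derivative h) := by
    push_cast
    rw [← hpow, C_add, C_1, C_mul]
    ring
  rw [step, hm, CharP.cast_eq_zero R p, map_zero, zero_mul]

open Finset in
private lemma my_key_sum {R : Type*} [CommRing R] (p : ℕ) (hp : p.Prime) (hodd : p ≠ 2)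
    [CharP R p] (h : R[X]) (hdeg : h.natDegree ≤ 8) (n : ℕ) :
    ∑ t ∈ Finset.range 9, (((t : ℤ) - 2 * ((n+1 : ℕ) : ℤ) : ℤ) : R) * h.coeff t *
      (if n + 1 < t then 0 else (h ^ ((p-1)/2)).coeff (n + 1 - t)) = 0 := by
  set m := (p-1)/2 with hmdef
  set g := h ^ m with hg
  have hA := my_poly_id p hp hodd h
  rw [← hmdef, ← hg] at hA
  have hco := congrArg (fun q : R[X] => q.coeff n) hA
  simp only [coeff_add, coeff_C_mul, coeff_zero] at hco
  rw [my_coeff_mul_range9 h (derivative g) hdeg n,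
      my_coeff_mul_range9 (derivative h) g
        (le_trans (natDegree_derivative_le h) (by omega)) n] at hco
  simp only [Polynomial.coeff_derivative] at hco
  -- hco : 2 * S1 + S2 = 0
  -- pointwise decomposition of the goal summand
  have point : ∀ t ∈ Finset.range 9,
      (((t : ℤ) - 2 * ((n+1 : ℕ) : ℤ) : ℤ) : R) * h.coeff t *
        (if n + 1 < t then 0 else g.coeff (n + 1 - t))
      = (-2) * (h.coeff t * (if n < t then 0 else g.coeff (n - t + 1) * ((↑(n-t) : R) + 1)))
        + (-(((t : ℕ) : R) * h.coeff t * (if n + 1 < t then 0 else g.coeff (n + 1 - t)))) := by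
    intro t _
    split_ifs with h1 h2
    · ring
    · omega
    · have ht : t = n + 1 := by omega
      subst ht
      push_cast
      ring
    · have hnt : t ≤ n := by omega
      have e1 : n - t + 1 = n + 1 - t := by omega
      rw [e1]
      have e2 : ((n - t : ℕ) : R) = (n : R) - (t : R) := by
        rw [Nat.cast_sub hnt]
      rw [e2]
      push_cast
      ring
  rw [Finset.sum_congr rfl point, Finset.sum_add_distrib]
  -- second sum: reindex
  have hW : ∑ t ∈ Finset.range 9,
      (-(((t : ℕ) : R) * h.coeff t * (if n + 1 < t then 0 else g.coeff (n + 1 - t))))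
      = - ∑ i ∈ Finset.range 9,
          h.coeff (i+1) * ((i : R) + 1) * (if n < i then 0 else g.coeff (n - i)) := by
    rw [Finset.sum_neg_distrib]
    congr 1
    rw [Finset.sum_range_succ'  (fun t => ((t : ℕ) : R) * h.coeff t * (if n + 1 < t then 0 else g.coeff (n + 1 - t))) 8]
    simp only [Nat.cast_zero, zero_mul, add_zero]
    have h9 : h.coeff 9 = 0 := Polynomial.coeff_eq_zero_of_natDegree_lt (by omega)
    conv_rhs => rw [Finset.sum_range_succ]
    norm_num [h9]
    refine Finset.sum_congr rfl fun i _ => ?_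
    have c2 : n + 1 - (i+1) = n - i := by omega
    rw [c2]
    split_ifs
    · rfl
    · ring
  rw [hW]
  rw [← Finset.mul_sum]
  linear_combination -hco

open Finset in
theorem vvec_recurrence
    {R : Type*} [CommRing R] (p : ℕ) (hp : p.Prime) (hodd : p ≠ 2) [CharP R p]
    (h : Polynomial R) (hdeg : h.natDegree ≤ 8) :
    ∀ (k : ℕ), 1 ≤ k → k ≤ p - 1 →
      (((2 * (k : ℤ) : ℤ) : R) * h.coeff 0) • vvec h p k =
        Matrix.vecMul (vvec h p (k - 1)) (Mmat h k) := by
  intro k hk1 hk2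
  obtain ⟨n, rfl⟩ : ∃ n, k = n + 1 := ⟨k - 1, by omega⟩
  have hkey := my_key_sum p hp hodd h hdeg n
  funext j
  fin_cases j <;>
    simp only [Pi.smul_apply, smul_eq_mul, Matrix.vecMul, dotProduct,
      Fin.sum_univ_eight, Mmat, Matrix.of_apply, vvec, Nat.add_sub_cancel,
      Fin.isValue, (show ((0:Fin 8):ℕ)=0 from rfl), (show ((1:Fin 8):ℕ)=1 from rfl),
      (show ((2:Fin 8):ℕ)=2 from rfl), (show ((3:Fin 8):ℕ)=3 from rfl),
      (show ((4:Fin 8):ℕ)=4 from rfl), (show ((5:Fin 8):ℕ)=5 from rfl),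
      (show ((6:Fin 8):ℕ)=6 from rfl), (show ((7:Fin 8):ℕ)=7 from rfl),
      Nat.add_assoc] <;>
    norm_num
  · first | ring | (split_ifs <;> ring)
  · first | ring | (split_ifs <;> ring)
  · first | ring | (split_ifs <;> ring)
  · first | ring | (split_ifs <;> ring)
  · first | ring | (split_ifs <;> ring)
  · first | ring | (split_ifs <;> ring)
  · first | ring | (split_ifs <;> ring)
  · simp only [Finset.sum_range_succ, Finset.sum_range_zero, zero_add, Nat.sub_zero,
      Nat.not_lt_zero, if_false] at hkey
    push_cast at hkey ⊢
    rw [if_neg (show ¬ (n + 8 < 7) by omega)]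
    rw [if_neg (show ¬ (n + 1 < 1) by omega)] at hkey
    simp only [show (n+1 < 2) ↔ (n+6 < 7) from by omega,
      show (n+1 < 3) ↔ (n+5 < 7) from by omega,
      show (n+1 < 4) ↔ (n+4 < 7) from by omega,
      show (n+1 < 5) ↔ (n+3 < 7) from by omega,
      show (n+1 < 6) ↔ (n+2 < 7) from by omega,
      show (n+1 < 8) ↔ (n < 7) from by omega] at hkey
    rcases Nat.lt_or_ge n 7 with hn | hn
    · interval_cases n <;> norm_num at hkey ⊢ <;> linear_combination -hkey
    · simp only [if_neg (show ¬(n < 7) by omega), if_neg (show ¬(n+1 < 7) by omega),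
        if_neg (show ¬(n+2 < 7) by omega), if_neg (show ¬(n+3 < 7) by omega),
        if_neg (show ¬(n+4 < 7) by omega), if_neg (show ¬(n+5 < 7) by omega),
        if_neg (show ¬(n+6 < 7) by omega)] at hkey ⊢
      linear_combination -hkey
end

section
/- One has −h_0^{p−1} · v_{p−1} = v_0 · (M_1 · M_2 ⋯ M_{p−1}) in R^8; equivalently, ((p−1)! · (2h_0)^{p−1}) · v_{p−1} = v_0 · (M_1 ⋯ M_{p−1}), since 2^{p−1}(p−1)! = −1 in R. -/
open Polynomial

open Finset in
lemma coeff_mul_le8 {R : Type*} [CommRing R] (u v : R[X]) (hu : u.natDegree ≤ 8) (k : ℕ) :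
    (u * v).coeff k = ∑ j ∈ Finset.range 9,
      if j ≤ k then u.coeff j * v.coeff (k - j) else 0 := by
  rw [coeff_mul, Finset.Nat.sum_antidiagonal_eq_sum_range_succ_mk]
  calc ∑ j ∈ Finset.range (k+1), u.coeff j * v.coeff (k - j)
      = ∑ j ∈ Finset.range (k+1), if j ≤ k then u.coeff j * v.coeff (k - j) else 0 :=
        Finset.sum_congr rfl fun j hj => by
          rw [if_pos (by simpa [Nat.lt_succ_iff] using hj)]
    _ = ∑ j ∈ Finset.range (k+10), if j ≤ k then u.coeff j * v.coeff (k - j) else 0 := by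
        refine Finset.sum_subset (Finset.range_subset_range.2 (by omega)) ?_
        intro j _ hj
        rw [if_neg (by simp only [Finset.mem_range] at hj; omega)]
    _ = ∑ j ∈ Finset.range 9, if j ≤ k then u.coeff j * v.coeff (k - j) else 0 := by
        refine (Finset.sum_subset (Finset.range_subset_range.2 (by omega)) ?_).symm
        intro j _ hj
        simp only [Finset.mem_range, not_lt] at hj
        have : u.coeff j = 0 := coeff_eq_zero_of_natDegree_lt (lt_of_le_of_lt hu (by omega))
        simp [this]

open Finset in
lemma key_poly {R : Type*} [CommRing R] (p : ℕ) (hp : p.Prime) (hodd : p ≠ 2) [CharP R p]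
    (h : R[X]) :
    C (2:R) * (h * derivative (h ^ ((p-1)/2))) + derivative h * h ^ ((p-1)/2) = 0 := by
  obtain ⟨t, ht⟩ := hp.odd_of_ne_two hodd
  have hp3 : 3 ≤ p := by
    have := hp.two_le; omega
  have hm : (p-1)/2 = t := by omega
  have ht1 : 1 ≤ t := by omega
  have hcast : (2 : R) * ((t : ℕ) : R) = -1 := by
    have h1 : ((p : ℕ) : R) = 0 := CharP.cast_eq_zero R p
    have h2 : ((2 * t + 1 : ℕ) : R) = 0 := by rw [← ht]; exact h1
    push_cast at h2
    linear_combination h2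
  rw [hm, derivative_pow]
  have hpow : h * (C ((t:ℕ):R) * h ^ (t - 1) * derivative h)
      = C ((t:ℕ):R) * (h ^ t * derivative h) := by
    have e : h ^ t = h ^ (t-1) * h := by rw [← pow_succ]; congr 1; omega
    rw [e]; ring
  rw [hpow, ← mul_assoc, ← C_mul, hcast]
  simp only [map_neg, map_one]
  ring

open Finset in
lemma keyrec {R : Type*} [CommRing R] (p : ℕ) (hp : p.Prime) (hodd : p ≠ 2) [CharP R p]
    (h : R[X]) (hdeg : h.natDegree ≤ 8) (k : ℕ) :
    ∑ i : Fin 8, vvec h p k i * (((8 : R) - (i:ℕ) - 2*((k:R)+1)) * h.coeff (8 - (i:ℕ)))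
      = 2*((k:R)+1) * h.coeff 0 * (h ^ ((p-1)/2)).coeff (k+1) := by
  have hk : (C (2:R) * (h * derivative (h ^ ((p-1)/2))) + derivative h * h ^ ((p-1)/2)).coeff k
      = 0 := by rw [key_poly p hp hodd h]; simp
  rw [coeff_add, coeff_C_mul, coeff_mul_le8 h _ hdeg,
    coeff_mul_le8 (derivative h) _ ((natDegree_derivative_le h).trans (by omega))] at hk
  simp only [coeff_derivative, Finset.sum_range_succ, Finset.sum_range_zero, zero_add] at hk
  simp only [Fin.sum_univ_eight, vvec,
    show ((0:Fin 8):ℕ) = 0 from rfl, show ((1:Fin 8):ℕ) = 1 from rfl,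
    show ((2:Fin 8):ℕ) = 2 from rfl, show ((3:Fin 8):ℕ) = 3 from rfl,
    show ((4:Fin 8):ℕ) = 4 from rfl, show ((5:Fin 8):ℕ) = 5 from rfl,
    show ((6:Fin 8):ℕ) = 6 from rfl, show ((7:Fin 8):ℕ) = 7 from rfl]
  norm_num only at hk ⊢
  rcases lt_or_ge k 8 with hk8 | hk8
  · interval_cases k <;>
      (norm_num at hk ⊢; linear_combination -hk)
  · rw [if_neg (by omega), if_neg (by omega), if_neg (by omega), if_neg (by omega),
      if_neg (by omega), if_neg (by omega), if_neg (by omega), if_neg (by omega)]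
    rw [if_pos (by omega : 0 ≤ k), if_pos (by omega : 1 ≤ k), if_pos (by omega : 2 ≤ k),
      if_pos (by omega : 3 ≤ k), if_pos (by omega : 4 ≤ k), if_pos (by omega : 5 ≤ k),
      if_pos (by omega : 6 ≤ k), if_pos (by omega : 7 ≤ k), if_pos (by omega : 8 ≤ k),
      if_pos (by omega : 0 ≤ k), if_pos (by omega : 1 ≤ k), if_pos (by omega : 2 ≤ k),
      if_pos (by omega : 3 ≤ k), if_pos (by omega : 4 ≤ k), if_pos (by omega : 5 ≤ k),
      if_pos (by omega : 6 ≤ k), if_pos (by omega : 7 ≤ k), if_pos (by omega : 8 ≤ k)] at hk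
    have h9 : h.coeff 9 = 0 := coeff_eq_zero_of_natDegree_lt (by omega)
    simp only [Nat.sub_zero, h9,
      show k - 1 + 1 = k from by omega, show k - 2 + 1 = k - 1 from by omega,
      show k - 3 + 1 = k - 2 from by omega, show k - 4 + 1 = k - 3 from by omega,
      show k - 5 + 1 = k - 4 from by omega, show k - 6 + 1 = k - 5 from by omega,
      show k - 7 + 1 = k - 6 from by omega, show k - 8 + 1 = k - 7 from by omega,
      show k + 0 - 7 = k - 7 from by omega, show k + 1 - 7 = k - 6 from by omega,
      show k + 2 - 7 = k - 5 from by omega, show k + 3 - 7 = k - 4 from by omega,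
      show k + 4 - 7 = k - 3 from by omega, show k + 5 - 7 = k - 2 from by omega,
      show k + 6 - 7 = k - 1 from by omega, show k + 7 - 7 = k from by omega,
      Nat.cast_sub (show (1:ℕ) ≤ k from by omega), Nat.cast_sub (show (2:ℕ) ≤ k from by omega),
      Nat.cast_sub (show (3:ℕ) ≤ k from by omega), Nat.cast_sub (show (4:ℕ) ≤ k from by omega),
      Nat.cast_sub (show (5:ℕ) ≤ k from by omega), Nat.cast_sub (show (6:ℕ) ≤ k from by omega),
      Nat.cast_sub (show (7:ℕ) ≤ k from by omega), Nat.cast_sub (show (8:ℕ) ≤ k from by omega)]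
      at hk ⊢
    linear_combination (norm := (push_cast; ring1)) -hk

open Finset in
lemma step {R : Type*} [CommRing R] (p : ℕ) (hp : p.Prime) (hodd : p ≠ 2) [CharP R p]
    (h : R[X]) (hdeg : h.natDegree ≤ 8) (k : ℕ) :
    Matrix.vecMul (vvec h p k) (Mmat h (k+1))
      = (2 * ((k:R)+1) * h.coeff 0) • vvec h p (k+1) := by
  funext j
  simp only [Matrix.vecMul, dotProduct, Mmat, Matrix.of_apply, Pi.smul_apply,
    smul_eq_mul]
  rcases eq_or_ne (j:ℕ) 7 with hj | hj
  · simp only [hj]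
    have hne : ∀ i : Fin 8, ¬ ((i:ℕ) = 7 + 1) := by
      intro i hi; have := i.isLt; omega
    have key := keyrec p hp hodd h hdeg k
    calc ∑ i : Fin 8, vvec h p k i *
          ((if (i:ℕ) = 7 + 1 then ((2 * ((k+1 : ℕ) : ℤ) : ℤ) : R) * h.coeff 0 else 0) +
            if (7:ℕ) = 7 then (((8 - (i : ℕ) : ℤ) - 2 * ((k+1:ℕ) : ℤ) : ℤ) : R)
              * h.coeff (8 - (i : ℕ)) else 0)
        = ∑ i : Fin 8, vvec h p k i * (((8 : R) - (i:ℕ) - 2*((k:R)+1)) * h.coeff (8 - (i:ℕ))) := by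
          refine Finset.sum_congr rfl fun i _ => ?_
          rw [if_neg (hne i), if_pos rfl, zero_add]
          push_cast
          ring
      _ = 2*((k:R)+1) * h.coeff 0 * (h ^ ((p-1)/2)).coeff (k+1) := key
      _ = 2 * ((k:R)+1) * h.coeff 0 * vvec h p (k+1) j := by
          simp only [vvec, hj, if_neg (show ¬ (k + 1 + 7 < 7) from by omega)]
          congr 2
  · have hjlt : (j:ℕ) < 7 := by have := j.isLt; omega
    rw [Finset.sum_eq_single (⟨(j:ℕ)+1, by omega⟩ : Fin 8)]
    · rw [if_pos rfl, if_neg hj, add_zero]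
      simp only [vvec]
      rw [show k + ((j:ℕ)+1) = k + 1 + (j:ℕ) from by omega]
      push_cast
      ring
    · intro b _ hb
      rw [if_neg (fun hh => hb (Fin.ext hh)), if_neg hj, add_zero, mul_zero]
    · intro hmem
      exact absurd (Finset.mem_univ _) hmem

open Finset in
lemma iterate {R : Type*} [CommRing R] (p : ℕ) (hp : p.Prime) (hodd : p ≠ 2) [CharP R p]
    (h : R[X]) (hdeg : h.natDegree ≤ 8) (n : ℕ) :
    Matrix.vecMul (vvec h p 0) (((List.range n).map (fun k => Mmat h (k+1))).prod)
      = (∏ k ∈ Finset.range n, (2 * ((k:R)+1) * h.coeff 0)) • vvec h p n := by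
  induction n with
  | zero => simp [Matrix.vecMul_one]
  | succ n ih =>
    rw [List.range_succ, List.map_append, List.prod_append, List.map_singleton,
      List.prod_singleton, ← Matrix.vecMul_vecMul, ih, Matrix.smul_vecMul,
      step p hp hodd h hdeg n, Finset.prod_range_succ, smul_smul, mul_comm]

open Finset in
theorem vvec_iterated_recurrence
    {R : Type*} [CommRing R] (p : ℕ) (hp : p.Prime) (hodd : p ≠ 2) [CharP R p]
    (h : Polynomial R) (hdeg : h.natDegree ≤ 8) :
    (-(h.coeff 0 ^ (p - 1))) • vvec h p (p - 1) =
        Matrix.vecMul (vvec h p 0)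
          (((List.range (p - 1)).map (fun k => Mmat h (k + 1))).prod) ∧
    ((((p - 1).factorial : R) * (2 * h.coeff 0) ^ (p - 1)) • vvec h p (p - 1) =
        Matrix.vecMul (vvec h p 0)
          (((List.range (p - 1)).map (fun k => Mmat h (k + 1))).prod)) ∧
    (2 : R) ^ (p - 1) * ((p - 1).factorial : R) = -1 := by
  haveI : Fact p.Prime := ⟨hp⟩
  have wilson : (2 : R) ^ (p - 1) * ((p - 1).factorial : R) = -1 := by
    have h2 : (2 : ZMod p) ≠ 0 := by
      have h2' : ((2:ℕ) : ZMod p) ≠ 0 := by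
        rw [Ne, ZMod.natCast_eq_zero_iff]
        exact fun hd => hodd ((Nat.prime_dvd_prime_iff_eq hp Nat.prime_two).1 hd)
      simpa using h2'
    have hz : (2 : ZMod p) ^ (p - 1) * (((p-1).factorial : ZMod p)) = -1 := by
      rw [ZMod.wilsons_lemma, ZMod.pow_card_sub_one_eq_one h2]
      ring
    have := congrArg (ZMod.castHom (dvd_refl p) R) hz
    simpa only [map_pow, map_mul, map_natCast, map_neg, map_one, map_ofNat] using this
  have hprod : (∏ k ∈ Finset.range (p-1), (2 * ((k:R)+1) * h.coeff 0))
      = -(h.coeff 0 ^ (p - 1)) := by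
    rw [Finset.prod_mul_distrib, Finset.prod_mul_distrib, Finset.prod_const, Finset.prod_const]
    have : (∏ k ∈ Finset.range (p-1), ((k:R)+1)) = ((p-1).factorial : R) := by
      have hfac := congrArg (Nat.cast : ℕ → R)
        (Finset.prod_range_add_one_eq_factorial (p-1))
      push_cast at hfac
      exact hfac
    rw [this, Finset.card_range]
    calc (2:R)^(p-1) * ((p-1).factorial : R) * h.coeff 0 ^ (p-1)
        = ((2:R)^(p-1) * ((p-1).factorial : R)) * h.coeff 0 ^ (p-1) := by ring
      _ = -(h.coeff 0 ^ (p-1)) := by rw [wilson]; ring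
  have main := iterate p hp hodd h hdeg (p-1)
  rw [hprod] at main
  refine ⟨main.symm, ?_, wilson⟩
  rw [main]
  congr 1
  rw [mul_pow]
  calc ((p-1).factorial : R) * ((2:R)^(p-1) * h.coeff 0 ^ (p-1))
      = ((2:R)^(p-1) * ((p-1).factorial : R)) * h.coeff 0 ^ (p-1) := by ring
    _ = -(h.coeff 0 ^ (p-1)) := by rw [wilson]; ring
end

section
/- For every integer b and every polynomial h ∈ R[x] of degree at most 8, one has W(h(x+β)) = T(β) · W(h) · T(−β) as 3×3 matrices over R, where β denotes the image of b in R. -/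
open Polynomial

/-- The 3×3 matrix `W(h)` over `R` with `W(h)_{i,j}` the coefficient of
`x^{p·i−j}` in `h^((p−1)/2)`, for `i, j ∈ {1,2,3}` (here 0-indexed by `Fin 3`). -/
noncomputable def Wmat (p : ℕ) {R : Type*} [CommRing R] (h : Polynomial R) :
    Matrix (Fin 3) (Fin 3) R :=
  Matrix.of fun i j => (h ^ ((p - 1) / 2)).coeff (p * ((i : ℕ) + 1) - ((j : ℕ) + 1))

/-- The 3×3 matrix `T(β)` with rows `(1, β, β²)`, `(0, 1, 2β)`, `(0, 0, 1)`. -/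
def Tmat {R : Type*} [CommRing R] (β : R) : Matrix (Fin 3) (Fin 3) R :=
  !![1, β, β ^ 2; 0, 1, 2 * β; 0, 0, 1]

section aux
variable {R : Type*} [CommRing R]

lemma cast_choose_p_eq_zero (p : ℕ) (hp : p.Prime) [CharP R p] {r : ℕ}
    (h0 : r ≠ 0) (hr : r < p) : ((p.choose r : ℕ) : R) = 0 := by
  obtain ⟨c, hc⟩ := hp.dvd_choose_self h0 hr
  rw [hc]
  push_cast
  simp [CharP.cast_eq_zero R p]

lemma cast_choose_pred (p : ℕ) (hp : p.Prime) [CharP R p] :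
    ∀ r : ℕ, r < p → (((p - 1).choose r : ℕ) : R) = (-1 : R) ^ r := by
  intro r
  induction r with
  | zero => simp
  | succ r ih =>
    intro hr
    have h1 : ((p.choose (r + 1) : ℕ) : R) = 0 :=
      cast_choose_p_eq_zero p hp (by omega) hr
    have pascal : (p - 1).choose r + (p - 1).choose (r + 1) = p.choose (r + 1) := by
      have hpp : p - 1 + 1 = p := by have := hp.pos; omega
      conv_rhs => rw [← hpp]
      rw [Nat.choose_succ_succ]
    have h2 := congrArg (Nat.cast : ℕ → R) pascal
    push_cast at h2
    rw [h1] at h2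
    have h3 : (((p - 1).choose (r + 1) : ℕ) : R) = -(((p - 1).choose r : ℕ) : R) := by
      linear_combination h2
    rw [h3, ih (by omega), pow_succ]
    ring

lemma lucasR (p : ℕ) [Fact p.Prime] [CharP R p] (n k : ℕ) :
    ((n.choose k : ℕ) : R) =
      (((n % p).choose (k % p) : ℕ) : R) * (((n / p).choose (k / p) : ℕ) : R) := by
  have h := Choose.choose_modEq_choose_mod_mul_choose_div_nat (p := p) (n := n) (k := k)
  have h2 := (CharP.natCast_eq_natCast R p).mpr h
  rwa [Nat.cast_mul] at h2

lemma wdiv_helper {p : ℕ} (t s : ℕ) (h1 : 1 ≤ s) (h2 : s ≤ p) (h3 : 1 ≤ t) :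
    (p * t - s) / p = t - 1 := by
  obtain ⟨t', rfl⟩ : ∃ t', t = t' + 1 := ⟨t - 1, by omega⟩
  have e : p * (t' + 1) - s = p * t' + (p - s) := by
    have : p * (t' + 1) = p * t' + p := by ring
    omega
  rw [e, Nat.mul_add_div (by omega), Nat.div_eq_of_lt (by omega)]
  omega

lemma wmod_helper {p : ℕ} (t s : ℕ) (h1 : 1 ≤ s) (h2 : s ≤ p) (h3 : 1 ≤ t) :
    (p * t - s) % p = p - s := by
  obtain ⟨t', rfl⟩ : ∃ t', t = t' + 1 := ⟨t - 1, by omega⟩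
  have e : p * (t' + 1) - s = p * t' + (p - s) := by
    have : p * (t' + 1) = p * t' + p := by ring
    omega
  rw [e, Nat.mul_add_mod, Nat.mod_eq_of_lt (by omega)]

end aux

section key
variable {R : Type*} [CommRing R]

lemma valA (p : ℕ) (hp : p.Prime) [CharP R p] (hp3 : 3 ≤ p) (hpodd : p % 2 = 1) :
    (((p - 1).choose (p - 2) : ℕ) : R) = -1 := by
  rw [cast_choose_pred p hp _ (by omega), Odd.neg_one_pow (by rw [Nat.odd_iff]; omega)]

lemma valB (p : ℕ) (hp : p.Prime) [CharP R p] (hp3 : 3 ≤ p) (hpodd : p % 2 = 1) :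
    (((p - 1).choose (p - 3) : ℕ) : R) = 1 := by
  rw [cast_choose_pred p hp _ (by omega), Even.neg_one_pow (by rw [Nat.even_iff]; omega)]

lemma valC (p : ℕ) (hp : p.Prime) [CharP R p] (hp3 : 3 ≤ p) :
    (((p - 2).choose (p - 3) : ℕ) : R) = -2 := by
  rw [show (p:ℕ) - 3 = (p - 2) - 1 by omega,
    Nat.choose_symm (by omega : 1 ≤ p - 2), Nat.choose_one_right,
    Nat.cast_sub (by omega : 2 ≤ p)]
  simp [CharP.cast_eq_zero R p]


/-- the crucial scalar identity -/
lemma key_scalar (p : ℕ) (hp : p.Prime) [Fact p.Prime] [CharP R p] (hp3 : 3 ≤ p)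
    (hpodd : p % 2 = 1) (β : R) (hβ : β ^ p = β)
    (a b c d : ℕ) (ha : a < 3) (hb : b < 3) (hc : c < 3) (hd : d < 3) :
    β ^ ((p * (c + 1) - (d + 1)) - (p * (a + 1) - (b + 1))) *
        (((p * (c + 1) - (d + 1)).choose (p * (a + 1) - (b + 1)) : ℕ) : R) =
      ((c.choose a : ℕ) : R) * β ^ (c - a) * (((b.choose d : ℕ) : R) * (-β) ^ (b - d)) := by
  rw [lucasR p, wmod_helper (c+1) (d+1) (by omega) (by omega) (by omega),
    wmod_helper (a+1) (b+1) (by omega) (by omega) (by omega),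
    wdiv_helper (c+1) (d+1) (by omega) (by omega) (by omega),
    wdiv_helper (a+1) (b+1) (by omega) (by omega) (by omega),
    Nat.add_sub_cancel, Nat.add_sub_cancel]
  -- case c < a
  rcases lt_or_ge c a with hca | hca
  · rw [Nat.choose_eq_zero_of_lt hca]
    simp
  -- case d > b
  rcases lt_or_ge b d with hbd | hbd
  · rw [Nat.choose_eq_zero_of_lt (by omega : p - (d+1) < p - (b+1)),
      Nat.choose_eq_zero_of_lt hbd]
    simp
  -- main case : a ≤ c, d ≤ b
  obtain ⟨t, rfl⟩ : ∃ t, c = a + t := ⟨c - a, by omega⟩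
  have hnk : (p * (a + t + 1) - (d + 1)) - (p * (a + 1) - (b + 1)) = p * t + (b - d) := by
    have e1 : p * (a + t + 1) = p * (a + 1) + p * t := by ring
    have e2 : p ≤ p * (a + 1) := by
      calc p = p * 1 := (mul_one p).symm
      _ ≤ p * (a + 1) := Nat.mul_le_mul_left p (by omega)
    omega
  rw [hnk, pow_add, pow_mul, hβ, Nat.add_sub_cancel_left]
  have hval : (((p - (d + 1)).choose (p - (b + 1)) : ℕ) : R) =
      ((b.choose d : ℕ) : R) * (-1 : R) ^ (b - d) := by
    interval_cases b <;> interval_cases d <;>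
      first
        | omega
        | (simp [Nat.choose_self]; done)
        | simpa using valA p hp hp3 hpodd
        | simpa using valB p hp hp3 hpodd
        | simpa using valC p hp hp3
  rw [hval]
  ring

end key

section main
variable {R : Type*} [CommRing R]

lemma Tmat_apply (γ : R) (x y : Fin 3) :
    Tmat γ x y = (((y:ℕ).choose (x:ℕ) : ℕ) : R) * γ ^ ((y:ℕ) - (x:ℕ)) := by
  fin_cases x <;> fin_cases y <;>
    simp [Tmat, Matrix.vecHead, Matrix.vecTail] <;> norm_num [Nat.choose] <;> ring

lemma coeff_comp_X_add_C (g : R[X]) (β : R) (k D : ℕ) (hD : g.natDegree < D) :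
    (g.comp (X + C β)).coeff k =
      ∑ n ∈ Finset.range D, g.coeff n * (β ^ (n - k) * ((n.choose k : ℕ) : R)) := by
  have h1 : g.comp (X + C β) = ∑ n ∈ Finset.range D, C (g.coeff n) * (X + C β) ^ n := by
    conv_lhs => rw [g.as_sum_range' D hD]
    rw [Polynomial.comp, Polynomial.eval₂_finset_sum]
    simp [Polynomial.eval₂_monomial]
  rw [h1, Polynomial.finset_sum_coeff]
  exact Finset.sum_congr rfl fun n _ => by
    rw [Polynomial.coeff_C_mul, Polynomial.coeff_X_add_C_pow]

lemma phi_inj {p : ℕ} (hp3 : 3 ≤ p) {a b c d : ℕ} (ha : a < 3) (hb : b < 3)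
    (hc : c < 3) (hd : d < 3) (h : p * (a+1) - (b+1) = p * (c+1) - (d+1)) :
    a = c ∧ b = d := by
  interval_cases a <;> interval_cases c <;> omega

end main

theorem Wmat_translate
    (p : ℕ) (hp : p.Prime) (hodd : p ≠ 2) {R : Type*} [CommRing R] [CharP R p]
    (b : ℤ) (h : Polynomial R) (hdeg : h.natDegree ≤ 8) :
    Wmat p (h.comp (Polynomial.X + Polynomial.C ((b : R)))) =
      Tmat ((b : R)) * Wmat p h * Tmat (-(b : R)) := by
  haveI : Fact p.Prime := ⟨hp⟩
  have hp3 : 3 ≤ p := by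
    have := hp.two_le
    omega
  have hpodd : p % 2 = 1 := Nat.odd_iff.mp (hp.odd_of_ne_two hodd)
  set β : R := (b : R) with hβdef
  have hβ : β ^ p = β := by
    have h1 : β = (ZMod.castHom (dvd_refl p) R) ((b : ZMod p)) := by simp [hβdef]
    rw [h1, ← map_pow, ZMod.pow_card]
  have hgdeg : (h ^ ((p - 1) / 2)).natDegree < 4 * p - 3 := by
    have h1 : (h ^ ((p - 1) / 2)).natDegree ≤ ((p - 1) / 2) * h.natDegree :=
      Polynomial.natDegree_pow_le
    have h2 : ((p - 1) / 2) * h.natDegree ≤ ((p - 1) / 2) * 8 :=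
      Nat.mul_le_mul_left _ hdeg
    omega
  ext i j
  have hki : (i : ℕ) < 3 := i.isLt
  have hkj : (j : ℕ) < 3 := j.isLt
  show ((h.comp (X + C β)) ^ ((p - 1) / 2)).coeff (p * ((i:ℕ)+1) - ((j:ℕ)+1)) = _
  rw [← Polynomial.pow_comp,
    coeff_comp_X_add_C (h ^ ((p - 1) / 2)) β (p * ((i:ℕ)+1) - ((j:ℕ)+1)) (4*p-3) hgdeg]
  set g := h ^ ((p - 1) / 2) with hg
  set k := p * ((i:ℕ)+1) - ((j:ℕ)+1) with hk
  have himsub : (Finset.univ.image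
      (fun x : Fin 3 × Fin 3 => p * ((x.1:ℕ)+1) - ((x.2:ℕ)+1))) ⊆ Finset.range (4*p-3) := by
    intro n hn
    rw [Finset.mem_image] at hn
    obtain ⟨⟨i', j'⟩, -, rfl⟩ := hn
    rw [Finset.mem_range]
    dsimp only
    have h1 : (i' : ℕ) < 3 := i'.isLt
    have h2 : (j' : ℕ) < 3 := j'.isLt
    have h3 : p * ((i':ℕ)+1) ≤ p * 3 := Nat.mul_le_mul_left _ (by omega)
    omega
  have hzero : ∀ n ∈ Finset.range (4*p-3),
      n ∉ Finset.univ.image (fun x : Fin 3 × Fin 3 => p * ((x.1:ℕ)+1) - ((x.2:ℕ)+1)) →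
      g.coeff n * (β ^ (n - k) * ((n.choose k : ℕ) : R)) = 0 := by
    intro n hn hnotin
    rw [Finset.mem_range] at hn
    rw [hk, lucasR p n, wmod_helper ((i:ℕ)+1) ((j:ℕ)+1) (by omega) (by omega) (by omega),
      wdiv_helper ((i:ℕ)+1) ((j:ℕ)+1) (by omega) (by omega) (by omega)]
    rcases lt_or_ge (n % p) (p - ((j:ℕ)+1)) with hv | hv
    · rw [Nat.choose_eq_zero_of_lt hv]
      simp
    · exfalso
      apply hnotin
      have hvlt : n % p < p := Nat.mod_lt _ (by omega)
      have hdm := Nat.div_add_mod n p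
      have hu3 : n / p < 4 := by
        rw [Nat.div_lt_iff_lt_mul (by omega : 0 < p)]
        omega
      have hu2 : n / p ≤ 2 := by
        by_contra hcon
        have h3 : n / p = 3 := by omega
        rw [h3] at hdm
        omega
      refine Finset.mem_image.mpr ⟨(⟨n / p, by omega⟩, ⟨p - 1 - n % p, by omega⟩),
        Finset.mem_univ _, ?_⟩
      show p * (n / p + 1) - (p - 1 - n % p + 1) = n
      have e1 : p * (n / p + 1) = p * (n / p) + p := by ring
      omega
  rw [← Finset.sum_subset himsub hzero,
    Finset.sum_image (fun x _ y _ hxy => by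
      obtain ⟨x1, x2⟩ := x
      obtain ⟨y1, y2⟩ := y
      obtain ⟨e1, e2⟩ := phi_inj hp3 x1.isLt x2.isLt y1.isLt y2.isLt hxy
      exact Prod.ext (Fin.ext e1) (Fin.ext e2))]
  simp only [Matrix.mul_apply, Finset.sum_mul]
  rw [Finset.sum_comm, Fintype.sum_prod_type]
  refine Finset.sum_congr rfl fun i' _ => Finset.sum_congr rfl fun j' _ => ?_
  have hW : Wmat p h i' j' = g.coeff (p * ((i':ℕ)+1) - ((j':ℕ)+1)) := rfl
  rw [hW, Tmat_apply β i i', Tmat_apply (-β) j' j]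
  have hks := key_scalar p hp hp3 hpodd β hβ (i:ℕ) (j:ℕ) (i':ℕ) (j':ℕ)
    i.isLt j.isLt i'.isLt j'.isLt
  rw [hk]
  linear_combination (g.coeff (p * ((i':ℕ)+1) - ((j':ℕ)+1))) * hks
end

section
/- Suppose the vectors C_{i,j} ∈ R^r (for 0 ≤ i ≤ ℓ and 0 ≤ j < 2^i) satisfy: C_{0,0} ≡ V (mod m_{0,0}); and for each 1 ≤ i ≤ ℓ and 0 ≤ j < 2^i, C_{i,j} ≡ C_{i−1,⌊j/2⌋} (mod m_{i,j}) if j is even, and C_{i,j} ≡ C_{i−1,⌊j/2⌋} · A_{i,j−1} (mod m_{i,j}) if j is odd. Then for every 1 ≤ n ≤ b−1 one has C_{ℓ,n} ≡ V · A_0 · A_1 ⋯ A_{n−1} (mod m_n). (This is the correctness of the accumulating remainder tree algorithm.) -/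
/-- The moduli of the remainder tree: `mtree m k j` is the node modulus at
distance `k` above the leaves, i.e. `m_{i,j} = mtree m (ℓ−i) j`, defined by
`m_{ℓ,j} = m_j` and `m_{i,j} = m_{i+1,2j} · m_{i+1,2j+1}`. -/
def mtree (m : ℕ → ℕ) : ℕ → ℕ → ℕ
  | 0, j => m j
  | k + 1, j => mtree m k (2 * j) * mtree m k (2 * j + 1)

/-- The matrix products of the remainder tree: `Atree A k j` is the node product at
distance `k` above the leaves, i.e. `A_{i,j} = Atree A (ℓ−i) j`, defined by
`A_{ℓ,j} = A_j` and `A_{i,j} = A_{i+1,2j} · A_{i+1,2j+1}`. -/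
def Atree {R : Type*} [CommRing R] {r : ℕ} (A : ℕ → Matrix (Fin r) (Fin r) R) :
    ℕ → ℕ → Matrix (Fin r) (Fin r) R
  | 0, j => A j
  | k + 1, j => Atree A k (2 * j) * Atree A k (2 * j + 1)

/-- Two row vectors over `R` are congruent modulo a positive integer `m` if each
entry of their difference lies in the ideal of `R` generated by the image of `m`. -/
def VecModEq {R : Type*} [CommRing R] {r : ℕ} (m : ℕ) (x y : Fin r → R) : Prop :=
  ∀ i : Fin r, x i - y i ∈ Ideal.span ({(m : R)} : Set R)

section
variable {R : Type*} [CommRing R] {r : ℕ}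

lemma vecModEq_of_dvd {m d : ℕ} (h : d ∣ m) {x y : Fin r → R}
    (hxy : VecModEq m x y) : VecModEq d x y := by
  intro i
  have hi := hxy i
  obtain ⟨k, rfl⟩ := h
  rw [Ideal.mem_span_singleton] at hi ⊢
  exact dvd_trans ⟨(k : R), by push_cast; ring⟩ hi

lemma vecModEq_trans {m : ℕ} {x y z : Fin r → R} (h1 : VecModEq m x y)
    (h2 : VecModEq m y z) : VecModEq m x z := fun i => by
  have := Ideal.add_mem _ (h1 i) (h2 i)
  simpa [sub_add_sub_cancel] using this

lemma vecModEq_mul {m : ℕ} {x y : Fin r → R} (h : VecModEq m x y)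
    (B : Matrix (Fin r) (Fin r) R) :
    VecModEq m (Matrix.vecMul x B) (Matrix.vecMul y B) := by
  intro i
  have hx : Matrix.vecMul x B i - Matrix.vecMul y B i = ∑ k, (x k - y k) * B k i := by
    simp [Matrix.vecMul, dotProduct, sub_mul, Finset.sum_sub_distrib]
  rw [hx]
  exact Ideal.sum_mem _ fun k _ => Ideal.mul_mem_right _ _ (h k)

lemma Atree_prod (A : ℕ → Matrix (Fin r) (Fin r) R) (k j : ℕ) :
    ((List.range (2 * j)).map (Atree A k)).prod
      = ((List.range j).map (Atree A (k + 1))).prod := by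
  induction j with
  | zero => simp
  | succ j ih =>
    have h2 : 2 * (j + 1) = (2 * j + 1) + 1 := by ring
    rw [h2, List.prod_range_succ, List.prod_range_succ, ih, List.prod_range_succ]
    show _ = _ * (Atree A k (2 * j) * Atree A k (2 * j + 1))
    rw [mul_assoc]

end

theorem remainder_tree_correct
    {R : Type*} [CommRing R] (r : ℕ) (hr : 1 ≤ r) (ℓ : ℕ)
    (m : ℕ → ℕ) (hmpos : ∀ j < 2 ^ ℓ, 0 < m j) (hm0 : m 0 = 1)
    (A : ℕ → Matrix (Fin r) (Fin r) R) (hA : A (2 ^ ℓ - 1) = 1)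
    (V : Fin r → R)
    (Cv : ℕ → ℕ → (Fin r → R))
    (hC0 : VecModEq (mtree m ℓ 0) (Cv 0 0) V)
    (hCeven : ∀ i, 1 ≤ i → i ≤ ℓ → ∀ j < 2 ^ i, Even j →
      VecModEq (mtree m (ℓ - i) j) (Cv i j) (Cv (i - 1) (j / 2)))
    (hCodd : ∀ i, 1 ≤ i → i ≤ ℓ → ∀ j < 2 ^ i, Odd j →
      VecModEq (mtree m (ℓ - i) j) (Cv i j)
        (Matrix.vecMul (Cv (i - 1) (j / 2)) (Atree A (ℓ - i) (j - 1)))) :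
    ∀ n, 1 ≤ n → n ≤ 2 ^ ℓ - 1 →
      VecModEq (m n) (Cv ℓ n) (Matrix.vecMul V (((List.range n).map A).prod)) := by
  have key : ∀ i, i ≤ ℓ → ∀ j < 2 ^ i,
      VecModEq (mtree m (ℓ - i) j) (Cv i j)
        (Matrix.vecMul V (((List.range j).map (Atree A (ℓ - i))).prod)) := by
    intro i
    induction i with
    | zero =>
      intro _ j hj
      interval_cases j
      simpa using hC0
    | succ i ih =>
      intro hi j hj
      have hi' : i ≤ ℓ := by omega
      have hℓ : ℓ - i = (ℓ - (i + 1)) + 1 := by omega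
      rcases Nat.even_or_odd j with he | ho
      · -- even case
        obtain ⟨j', hje⟩ := he
        have hj2 : j = 2 * j' := by omega
        subst hj2
        have hj' : j' < 2 ^ i := by
          have := hj; rw [pow_succ] at this; omega
        have h1 := hCeven (i + 1) (by omega) hi (2 * j') hj ⟨j', by ring⟩
        simp only [Nat.add_sub_cancel, Nat.mul_div_cancel_left _ (by norm_num : 0 < 2)] at h1
        have h2 := ih hi' j' hj'
        have hdvd : mtree m (ℓ - (i + 1)) (2 * j') ∣ mtree m (ℓ - i) j' := by
          rw [hℓ]; exact ⟨mtree m (ℓ - (i+1)) (2*j'+1), rfl⟩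
        have h2' := vecModEq_of_dvd hdvd h2
        have hprod : ((List.range j').map (Atree A (ℓ - i))).prod
            = ((List.range (2 * j')).map (Atree A (ℓ - (i + 1)))).prod := by
          rw [hℓ, Atree_prod]
        rw [hprod] at h2'
        exact vecModEq_trans h1 h2'
      · -- odd case
        obtain ⟨j', hje⟩ := ho
        subst hje
        have hj' : j' < 2 ^ i := by
          have := hj; rw [pow_succ] at this; omega
        have h1 := hCodd (i + 1) (by omega) hi (2 * j' + 1) hj ⟨j', rfl⟩
        simp only [Nat.add_sub_cancel] at h1
        have hq : (2 * j' + 1) / 2 = j' := by omega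
        rw [hq] at h1
        have h2 := ih hi' j' hj'
        have hdvd : mtree m (ℓ - (i + 1)) (2 * j' + 1) ∣ mtree m (ℓ - i) j' := by
          rw [hℓ]; exact ⟨mtree m (ℓ - (i+1)) (2*j'), mul_comm _ _⟩
        have h2' := vecModEq_mul (vecModEq_of_dvd hdvd h2)
          (Atree A (ℓ - (i + 1)) (2 * j'))
        rw [Matrix.vecMul_vecMul] at h2'
        have hprod : ((List.range j').map (Atree A (ℓ - i))).prod
              * Atree A (ℓ - (i + 1)) (2 * j')
            = ((List.range (2 * j' + 1)).map (Atree A (ℓ - (i + 1)))).prod := by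
          rw [hℓ, List.prod_range_succ, Atree_prod]
        rw [hprod] at h2'
        exact vecModEq_trans h1 h2'
  intro n hn hnb
  have hb : 0 < 2 ^ ℓ := Nat.two_pow_pos ℓ
  have := key ℓ le_rfl n (by omega)
  simp only [Nat.sub_self] at this
  have hmap : (List.range n).map (Atree A 0) = (List.range n).map A := by
    apply List.map_congr_left
    intro k _
    rfl
  rw [hmap] at this
  exact this
end
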